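/- arXiv:2302.07694 — 2 statements merged into one kernel-verified Lean document; each statement's English description precedes it below -/
import Mathlib

section
/- Let m ≥ 1 and let c be a function from partitions of m to the natural numbers, not identically zero. For each composition α of m set d_α = Σ_{λ ⊢ m} c(λ) · #{T ∈ SYT(λ) : DesComp(T) = α}, and let α* be the lexicographically largest composition of m with d_{α*} ≠ 0. Then α* is a partition, d_{α*} = c(α*), and d_β ≥ c(α*) · #{T ∈ SYT(α*) : DesComp(T) = β} for every composition β of m. -/
open scoped Classical

namespace QC

/-- A filling assigns a natural-number entry to each cell `(i, j)`;
entries are `0` outside the shape. Values are 1-based. -/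
abbrev Filling : Type := ℕ → ℕ → ℕ

/-- The cell `(i, j)` (row `i`, column `j`, both 0-based) lies in the Young diagram of `lam`. -/
def InShape (lam : List ℕ) (i j : ℕ) : Prop :=
  i < lam.length ∧ j < lam.getD i 0

/-- The finite set of cells of the Young diagram of `lam`. -/
def cells (lam : List ℕ) : Finset (ℕ × ℕ) :=
  (Finset.range lam.length).biUnion fun i =>
    ({i} : Finset ℕ) ×ˢ Finset.range (lam.getD i 0)

/-- `lam` is a partition of `m`: weakly decreasing, positive parts, summing to `m`. -/
def IsPartitionOf (m : ℕ) (lam : List ℕ) : Prop :=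
  lam.Pairwise (· ≥ ·) ∧ (∀ x ∈ lam, 0 < x) ∧ lam.sum = m

/-- `a` is a composition of `m`: positive parts summing to `m`. -/
def IsCompositionOf (m : ℕ) (a : List ℕ) : Prop :=
  (∀ x ∈ a, 0 < x) ∧ a.sum = m

/-- `T` is a semistandard Young tableau of shape `lam`: positive entries on the shape,
zero off the shape, rows weakly increasing, columns strictly increasing. -/
def IsSSYT (lam : List ℕ) (T : Filling) : Prop :=
  (∀ i j, ¬ InShape lam i j → T i j = 0) ∧
  (∀ i j, InShape lam i j → 0 < T i j) ∧
  (∀ i j1 j2, j1 ≤ j2 → InShape lam i j2 → T i j1 ≤ T i j2) ∧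
  (∀ i1 i2 j, i1 < i2 → InShape lam i2 j → T i1 j < T i2 j)

/-- All entries of `T` are at most `n`. -/
def EntriesLE (n : ℕ) (T : Filling) : Prop := ∀ i j, T i j ≤ n

/-- `T` is a standard Young tableau of shape `lam ⊢ m`: a semistandard tableau in which
each of `1, …, m` appears exactly once. -/
def IsSYT (lam : List ℕ) (m : ℕ) (T : Filling) : Prop :=
  IsSSYT lam T ∧ EntriesLE m T ∧
    ∀ k, 1 ≤ k → k ≤ m → ∃! c : ℕ × ℕ, InShape lam c.1 c.2 ∧ T c.1 c.2 = k

/-- `k` is a descent of the standard tableau `T`: `k + 1` lies in a strictly lower row. -/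
def IsDescent (lam : List ℕ) (T : Filling) (k : ℕ) : Prop :=
  ∃ i1 j1 i2 j2, InShape lam i1 j1 ∧ InShape lam i2 j2 ∧
    T i1 j1 = k ∧ T i2 j2 = k + 1 ∧ i1 < i2

/-- The sorted list of descents of `T`, a standard tableau with `m` cells. -/
noncomputable def descentList (lam : List ℕ) (m : ℕ) (T : Filling) : List ℕ :=
  ((Finset.Ico 1 m).filter fun k => IsDescent lam T k).sort (· ≤ ·)

/-- The number of descents of `T`. -/
noncomputable def numDescents (lam : List ℕ) (m : ℕ) (T : Filling) : ℕ :=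
  ((Finset.Ico 1 m).filter fun k => IsDescent lam T k).card

/-- The descent composition `(d₁, d₂ - d₁, …, m - d_{s-1})` of a standard tableau. -/
noncomputable def desComp (lam : List ℕ) (m : ℕ) (T : Filling) : List ℕ :=
  if m = 0 then [] else
    List.zipWith (· - ·) (descentList lam m T ++ [m]) (0 :: descentList lam m T)

/-- The number of cells of `T` carrying the entry `v`. -/
def countEq (lam : List ℕ) (T : Filling) (v : ℕ) : ℕ :=
  ((cells lam).filter fun c => T c.1 c.2 = v).card

/-- The weight of `T` as a list `(γ₁, …, γₙ)`, `γᵢ` the number of entries equal to `i`. -/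
def wt (lam : List ℕ) (n : ℕ) (T : Filling) : List ℕ :=
  (List.range n).map fun v => countEq lam T (v + 1)

/-- The standardization of `T`: cells are relabelled `1, …, m` in order of increasing entry,
breaking ties between equal entries by increasing column index. -/
noncomputable def stdize (lam : List ℕ) (T : Filling) : Filling := fun i j =>
  if InShape lam i j then
    ((cells lam).filter fun c =>
      T c.1 c.2 < T i j ∨ (T c.1 c.2 = T i j ∧ c.2 ≤ j)).card
  else 0

/-- Given a weak composition `g`, `destValue g k` is the unique `i` with
`g₁ + ⋯ + g_{i-1} < k ≤ g₁ + ⋯ + g_i` (and `0` for `k = 0`). -/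
def destValue (g : List ℕ) (k : ℕ) : ℕ :=
  ((List.range g.length).filter fun i => (g.take i).sum < k).length

/-- The destandardization `D_g(T₀)`: each entry `j` of `T₀` is replaced by the unique `i`
with `g₁ + ⋯ + g_{i-1} < j ≤ g₁ + ⋯ + g_i`. -/
def Dmap (g : List ℕ) (T : Filling) : Filling := fun i j => destValue g (T i j)

/-- `Refines a b`: the composition `b` refines `a`, i.e. `b` can be cut into consecutive
blocks whose sums are the parts of `a` in order. -/
def Refines (a b : List ℕ) : Prop :=
  ∃ L : List (List ℕ), L.flatten = b ∧ L.map List.sum = a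

/-- Strict lexicographic order on integer sequences. -/
def lexLt (a b : List ℕ) : Prop := List.Lex (· < ·) a b

/-- Weak lexicographic order on integer sequences. -/
def lexLe (a b : List ℕ) : Prop := a = b ∨ lexLt a b

/-- The largest entry of `T`. -/
def maxEntry (lam : List ℕ) (T : Filling) : ℕ :=
  (cells lam).sup fun c => T c.1 c.2

/-- The weight of `T` (over all values), with zero parts deleted. -/
def wtFull (lam : List ℕ) (T : Filling) : List ℕ :=
  ((List.range (maxEntry lam T)).map fun v => countEq lam T (v + 1)).filter (· ≠ 0)

/-- The proper partial sums `α₁, α₁ + α₂, …, α₁ + ⋯ + α_{s-1}` of a composition. -/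
def innerSums (a : List ℕ) : List ℕ :=
  (List.range a.length).tail.map fun t => (a.take t).sum

/-- `f : Fin m → Fin n` encodes a sequence `1 ≤ i₁ ≤ i₂ ≤ … ≤ i_m ≤ n` (via `i_t = f (t-1) + 1`)
which ascends strictly, `i_j < i_{j+1}`, at every proper partial sum `j` of `a`. -/
def IsFWord (m n : ℕ) (a : List ℕ) (f : Fin m → Fin n) : Prop :=
  Monotone f ∧
    ∀ (t : ℕ) (ht : t + 1 < m), (t + 1) ∈ innerSums a →
      f ⟨t, Nat.lt_of_succ_lt ht⟩ < f ⟨t + 1, ht⟩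

/-- The fundamental quasisymmetric polynomial `F_a(x₁, …, xₙ)` of degree `m`. -/
noncomputable def Fpoly (m n : ℕ) (a : List ℕ) : MvPolynomial (Fin n) ℤ :=
  ∑ f ∈ Finset.univ.filter (fun f : Fin m → Fin n => IsFWord m n a f),
    ∏ t : Fin m, MvPolynomial.X (f t)

/-- The monomial `x₁^{γ₁} ⋯ xₙ^{γₙ}` of a tableau `T` of weight `γ`. -/
noncomputable def wtMonomial (lam : List ℕ) (n : ℕ) (T : Filling) :
    MvPolynomial (Fin n) ℤ :=
  ∏ i : Fin n, MvPolynomial.X i ^ countEq lam T (i.val + 1)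

/-- `Rot` of a word `w` of length `k` on `{1, …, n}`: the `j`-th letter of `rot k n w`
is `n + 1 - w_{k+1-j}` (1-based), here written 0-based. -/
def rot (k n : ℕ) (w : Fin k → ℕ) : Fin k → ℕ := fun j =>
  n + 1 - w ⟨k - 1 - j.val, by have := j.isLt; omega⟩

/-- The descent set of a word `w = w₁ ⋯ w_k`: positions `i ∈ {1, …, k-1}` with `wᵢ > w_{i+1}`
(1-based positions; `w ⟨i-1,_⟩` is `wᵢ`). -/
noncomputable def wordDes (k : ℕ) (w : Fin k → ℕ) : Finset ℕ :=
  (Finset.Ico 1 k).filter fun i =>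
    ∃ (h1 : i - 1 < k) (h2 : i < k), w ⟨i, h2⟩ < w ⟨i - 1, h1⟩

/-- The descent composition of a word of length `k`. -/
noncomputable def wordDesComp (k : ℕ) (w : Fin k → ℕ) : List ℕ :=
  if k = 0 then []
  else
    List.zipWith (· - ·) ((wordDes k w).sort (· ≤ ·) ++ [k])
      (0 :: (wordDes k w).sort (· ≤ ·))

/-! Fill a standard tableau `T` of shape `λ ⊢ m` row by row. As long as no descent of `T` falls
strictly inside a block `(λ₁ + ⋯ + λₖ, λ₁ + ⋯ + λₖ₊₁)`, row `k + 1` is forced to hold exactly the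
next `λₖ₊₁` values. So either `T` is the superstandard tableau, whose descent composition is `λ`,
or the first inner descent makes `DesComp T` agree with `λ` up to some part and then take a
strictly smaller part. The matrix `#{T ∈ SYT(λ) : DesComp T = α}` is therefore unitriangular for
the lexicographic order, and the lex-largest term of a nonnegative combination of its rows is a
row index `λ`, with coefficient `c λ`. -/

section Unitriangular

variable {ι α : Type*} [Finite ι]

theorem mul_le_finsum_mul (c : ι → ℕ) (N : ι → α → ℕ) (i : ι) (a : α) :
    c i * N i a ≤ ∑ᶠ j, c j * N j a :=
  single_le_finsum (f := fun j => c j * N j a) i (Set.toFinite _) fun _ => Nat.zero_le _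

theorem exists_eq_and_finsum_eq_of_unitriangular [PartialOrder α] {e : ι → α}
    (he : Function.Injective e) {N : ι → α → ℕ} (hdiag : ∀ i, N i (e i) = 1)
    (hsupp : ∀ i a, N i a ≠ 0 → a ≤ e i)
    (c : ι → ℕ) {top : α} (hne : ∑ᶠ j, c j * N j top ≠ 0)
    (hmax : ∀ i, ∑ᶠ j, c j * N j (e i) ≠ 0 → e i ≤ top) :
    ∃ i, e i = top ∧ ∑ᶠ j, c j * N j top = c i := by
  have hle_top : ∀ i, c i ≠ 0 → e i ≤ top := fun i hci =>
    hmax i (by have := mul_le_finsum_mul c N i (e i); rw [hdiag, mul_one] at this; omega)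
  obtain ⟨i, hi⟩ : ∃ i, c i * N i top ≠ 0 := by
    by_contra! h
    exact hne (finsum_eq_zero_of_forall_eq_zero h)
  have hi_top : e i = top :=
    le_antisymm (hle_top i (left_ne_zero_of_mul hi)) (hsupp i top (right_ne_zero_of_mul hi))
  refine ⟨i, hi_top, ?_⟩
  rw [finsum_eq_single _ i, ← hi_top, hdiag, mul_one]
  intro j hji
  by_contra hj
  rw [← hi_top] at hj
  refine hji (he (le_antisymm ?_ (hsupp j _ (right_ne_zero_of_mul hj))))
  exact hi_top ▸ hle_top j (left_ne_zero_of_mul hj)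

end Unitriangular

theorem lexLe_iff_le {a b : List ℕ} : lexLe a b ↔ a ≤ b := by
  rw [lexLe, le_iff_eq_or_lt]
  rfl

theorem finite_isPartitionOf (m : ℕ) : Finite {l : List ℕ // IsPartitionOf m l} := by
  refine Finite.of_injective (β := Nat.Partition m)
    (fun l => ⟨(l.1 : Multiset ℕ), fun {i} hi => l.2.2.1 i hi, by simp [l.2.2.2]⟩) ?_
  rintro ⟨l₁, h₁⟩ ⟨l₂, h₂⟩ he
  simp only [Nat.Partition.mk.injEq, Multiset.coe_eq_coe] at he
  exact Subtype.ext (he.eq_of_pairwise' h₁.1 h₂.1)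

def partialSum (lam : List ℕ) (k : ℕ) : ℕ := (lam.take k).sum

def partialSums (lam : List ℕ) (k : ℕ) : List ℕ :=
  (List.range k).map fun t => partialSum lam (t + 1)

theorem take_succ_eq_append_getD {lam : List ℕ} {k : ℕ} (hk : k < lam.length) :
    lam.take (k + 1) = lam.take k ++ [lam.getD k 0] := by
  rw [List.take_add_one, List.getElem?_eq_getElem hk, List.getD_eq_getElem lam 0 hk]
  rfl

theorem partialSum_succ {lam : List ℕ} {k : ℕ} (hk : k < lam.length) :
    partialSum lam (k + 1) = partialSum lam k + lam.getD k 0 := by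
  rw [partialSum, partialSum, take_succ_eq_append_getD hk, List.sum_append, List.sum_singleton]

theorem partialSums_succ (lam : List ℕ) (k : ℕ) :
    partialSums lam (k + 1) = partialSums lam k ++ [partialSum lam (k + 1)] := by
  rw [partialSums, List.range_succ, List.map_append, partialSums]
  rfl

theorem mem_partialSums {lam : List ℕ} {k x : ℕ} :
    x ∈ partialSums lam k ↔ ∃ t < k, partialSum lam (t + 1) = x := by
  simp only [partialSums, List.mem_map, List.mem_range]

theorem exists_partialSum_lt_le {lam : List ℕ} {k v : ℕ} (hv : 1 ≤ v)
    (hvk : v ≤ partialSum lam k) :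
    ∃ a < k, partialSum lam a < v ∧ v ≤ partialSum lam (a + 1) := by
  induction k with
  | zero => exact absurd hvk (by simp [partialSum]; omega)
  | succ k ih =>
    rcases le_or_gt v (partialSum lam k) with h | h
    · obtain ⟨a, ha, h₁, h₂⟩ := ih h
      exact ⟨a, by omega, h₁, h₂⟩
    · exact ⟨k, by omega, h, hvk⟩

namespace IsPartitionOf

variable {m : ℕ} {lam : List ℕ}

theorem getD_pos (hlam : IsPartitionOf m lam) {i : ℕ} (hi : i < lam.length) :
    0 < lam.getD i 0 := by
  rw [List.getD_eq_getElem lam 0 hi]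
  exact hlam.2.1 _ (List.getElem_mem hi)

theorem getD_antitone (hlam : IsPartitionOf m lam) {i i' : ℕ} (h : i' ≤ i)
    (hi : i < lam.length) : lam.getD i 0 ≤ lam.getD i' 0 := by
  rcases h.eq_or_lt with rfl | h
  · exact le_rfl
  · rw [List.getD_eq_getElem lam 0 hi, List.getD_eq_getElem lam 0 (h.trans hi)]
    exact hlam.1.rel_get_of_lt (a := ⟨i', h.trans hi⟩) (b := ⟨i, hi⟩) h

theorem length_pos (hlam : IsPartitionOf m lam) (hm : 1 ≤ m) : 0 < lam.length := by
  rw [List.length_pos_iff]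
  rintro rfl
  have := hlam.2.2
  simp only [List.sum_nil] at this
  omega

theorem partialSum_length (hlam : IsPartitionOf m lam) : partialSum lam lam.length = m := by
  rw [partialSum, List.take_length, hlam.2.2]

theorem partialSum_lt_succ (hlam : IsPartitionOf m lam) {k : ℕ} (hk : k < lam.length) :
    partialSum lam k < partialSum lam (k + 1) := by
  rw [partialSum_succ hk]
  have := hlam.getD_pos hk
  omega

theorem partialSum_mono (hlam : IsPartitionOf m lam) : Monotone (partialSum lam) := by
  refine monotone_nat_of_le_succ fun k => ?_
  rcases lt_or_ge k lam.length with hk | hk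
  · exact (hlam.partialSum_lt_succ hk).le
  · rw [partialSum, partialSum, List.take_of_length_le hk, List.take_of_length_le (by omega)]

theorem partialSum_lt_partialSum (hlam : IsPartitionOf m lam) {a b : ℕ} (hab : a < b)
    (hb : b ≤ lam.length) : partialSum lam a < partialSum lam b :=
  (hlam.partialSum_lt_succ (by omega)).trans_le (hlam.partialSum_mono hab)

theorem partialSum_le (hlam : IsPartitionOf m lam) (k : ℕ) : partialSum lam k ≤ m := by
  rcases le_or_gt k lam.length with h | h
  · exact hlam.partialSum_length ▸ hlam.partialSum_mono h
  · rw [partialSum, List.take_of_length_le h.le, hlam.2.2]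

theorem partialSum_lt (hlam : IsPartitionOf m lam) {k : ℕ} (hk : k < lam.length) :
    partialSum lam k < m :=
  hlam.partialSum_length ▸ hlam.partialSum_lt_partialSum hk le_rfl

theorem one_le_partialSum (hlam : IsPartitionOf m lam) {a : ℕ} (ha : 1 ≤ a)
    (ha' : a ≤ lam.length) : 1 ≤ partialSum lam a :=
  hlam.partialSum_lt_partialSum (a := 0) ha ha'

theorem partialSums_pairwise (hlam : IsPartitionOf m lam) {k : ℕ} (hk : k ≤ lam.length) :
    (partialSums lam k).Pairwise (· < ·) := by
  rw [partialSums, List.pairwise_map]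
  exact List.pairwise_lt_range.imp_of_mem fun ha hb hab =>
    hlam.partialSum_lt_partialSum (by omega) (by simp at hb; omega)

end IsPartitionOf

def gapsFrom (m : ℕ) : ℕ → List ℕ → List ℕ
  | prev, [] => [m - prev]
  | prev, x :: D => (x - prev) :: gapsFrom m x D

theorem zipWith_sub_eq_gapsFrom (m : ℕ) (D : List ℕ) (prev : ℕ) :
    List.zipWith (· - ·) (D ++ [m]) (prev :: D) = gapsFrom m prev D := by
  induction D generalizing prev with
  | nil => simp [gapsFrom]
  | cons x D ih => simp [gapsFrom, ih x]

theorem desComp_eq_gapsFrom (lam : List ℕ) {m : ℕ} (T : Filling) (hm : m ≠ 0) :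
    desComp lam m T = gapsFrom m 0 (descentList lam m T) := by
  rw [desComp, if_neg hm, zipWith_sub_eq_gapsFrom]

theorem gapsFrom_partialSums_append (m : ℕ) {lam : List ℕ} {k : ℕ} (hk : k ≤ lam.length)
    (B : List ℕ) :
    gapsFrom m 0 (partialSums lam k ++ B) = lam.take k ++ gapsFrom m (partialSum lam k) B := by
  induction k generalizing B with
  | zero => simp [partialSums, partialSum]
  | succ k ih =>
    have hk' : k < lam.length := by omega
    rw [partialSums_succ, List.append_assoc, List.singleton_append, ih hk'.le,
      take_succ_eq_append_getD hk', gapsFrom, partialSum_succ hk', Nat.add_sub_cancel_left,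
      List.append_assoc, List.singleton_append]

theorem Finset.exists_sort_eq_append (S : Finset ℕ) {l : List ℕ} {bound : ℕ}
    (hl : l.Pairwise (· < ·)) (hmem : ∀ x, x ∈ l ↔ x ∈ S ∧ x ≤ bound) :
    ∃ B, S.sort (· ≤ ·) = l ++ B ∧ ∀ x ∈ B, bound < x := by
  set D := S.sort (· ≤ ·)
  have hD : D.Pairwise (· ≤ ·) := S.pairwise_sort _
  have hlow : D.filter (· ≤ bound) = l := by
    refine List.Perm.eq_of_pairwise' (hD.filter _) (hl.imp le_of_lt) ?_
    rw [List.perm_ext_iff_of_nodup ((S.sort_nodup _).filter _) (hl.imp ne_of_lt)]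
    intro x
    simp [hmem]
  refine ⟨D.filter fun x => !decide (x ≤ bound), ?_,
    fun x hx => by simpa using (List.mem_filter.1 hx).2⟩
  rw [← hlow]
  refine List.Perm.eq_of_pairwise' hD ?_ (List.filter_append_perm _ D).symm
  rw [List.pairwise_append]
  refine ⟨hD.filter _, hD.filter _, fun x hx y hy => ?_⟩
  simp only [List.mem_filter, decide_eq_true_eq, Bool.not_eq_eq_eq_not, Bool.not_true,
    decide_eq_false_iff_not] at hx hy
  omega

theorem InShape.mono {m : ℕ} {lam : List ℕ} (hlam : IsPartitionOf m lam) {i j i' j' : ℕ}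
    (h : InShape lam i j) (hi : i' ≤ i) (hj : j' ≤ j) : InShape lam i' j' :=
  ⟨by have := h.1; omega, hj.trans_lt (h.2.trans_le (hlam.getD_antitone hi h.1))⟩

namespace IsSYT

variable {m : ℕ} {lam : List ℕ} {T : Filling}

theorem exists_cell (hT : IsSYT lam m T) {v : ℕ} (hv : 1 ≤ v) (hvm : v ≤ m) :
    ∃ i j, InShape lam i j ∧ T i j = v := by
  obtain ⟨c, hc, -⟩ := hT.2.2 v hv hvm
  exact ⟨c.1, c.2, hc⟩

theorem eq_of_entry_eq (hT : IsSYT lam m T) {i₁ j₁ i₂ j₂ : ℕ} (h₁ : InShape lam i₁ j₁)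
    (h₂ : InShape lam i₂ j₂) (he : T i₁ j₁ = T i₂ j₂) : i₁ = i₂ ∧ j₁ = j₂ := by
  obtain ⟨c, -, hc⟩ := hT.2.2 (T i₁ j₁) (hT.1.2.1 _ _ h₁) (hT.2.1 i₁ j₁)
  have e := (hc (i₁, j₁) ⟨h₁, rfl⟩).trans (hc (i₂, j₂) ⟨h₂, he.symm⟩).symm
  exact Prod.ext_iff.1 e

theorem entry_lt_entry (hlam : IsPartitionOf m lam) (hT : IsSYT lam m T) {i j i' j' : ℕ}
    (h : InShape lam i j) (hi : i' ≤ i) (hj : j' ≤ j) (hne : (i', j') ≠ (i, j)) :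
    T i' j' < T i j := by
  have hrow : T i' j' ≤ T i' j := hT.1.2.2.1 i' j' j hj (h.mono hlam hi le_rfl)
  rcases hi.lt_or_eq with hi | rfl
  · exact hrow.trans_lt (hT.1.2.2.2 i' i j hi h)
  · refine hrow.lt_of_ne fun he => hne ?_
    rw [(hT.eq_of_entry_eq (h.mono hlam le_rfl hj) h he).2]

end IsSYT

def RowsFilled (lam : List ℕ) (T : Filling) (k : ℕ) : Prop :=
  ∀ i < k, ∀ j < lam.getD i 0, T i j = partialSum lam i + j + 1

namespace RowsFilled

variable {m : ℕ} {lam : List ℕ} {T : Filling} {k : ℕ}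

theorem mono (hRF : RowsFilled lam T k) {k' : ℕ} (hk : k' ≤ k) : RowsFilled lam T k' :=
  fun i hi => hRF i (by omega)

theorem entry_le (hlam : IsPartitionOf m lam) (hRF : RowsFilled lam T k) {i j : ℕ}
    (hi : i < k) (h : InShape lam i j) : T i j ≤ partialSum lam k := by
  have hsucc := partialSum_succ h.1
  have hmono := hlam.partialSum_mono (show i + 1 ≤ k by omega)
  have := h.2
  rw [hRF i hi j h.2]
  omega

theorem exists_cell (hRF : RowsFilled lam T k)
    (hk : k ≤ lam.length) {v : ℕ} (hv : 1 ≤ v) (hvk : v ≤ partialSum lam k) :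
    ∃ a < k, ∃ j, InShape lam a j ∧ T a j = v := by
  obtain ⟨a, ha, h₁, h₂⟩ := exists_partialSum_lt_le hv hvk
  have hsucc := partialSum_succ (show a < lam.length by omega)
  refine ⟨a, ha, v - partialSum lam a - 1, ⟨by omega, by omega⟩, ?_⟩
  rw [hRF a ha _ (by omega)]
  omega

theorem row_lt_of_entry_le (hT : IsSYT lam m T)
    (hRF : RowsFilled lam T k) (hk : k ≤ lam.length) {i j : ℕ} (h : InShape lam i j)
    (hv : T i j ≤ partialSum lam k) : i < k := by
  obtain ⟨a, ha, j', h', hval⟩ := hRF.exists_cell hk (hT.1.2.1 i j h) hv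
  exact (hT.eq_of_entry_eq h h' hval.symm).1 ▸ ha

theorem le_row_of_entry_gt (hlam : IsPartitionOf m lam) (hRF : RowsFilled lam T k) {i j : ℕ}
    (h : InShape lam i j) (hv : partialSum lam k < T i j) : k ≤ i := by
  by_contra hi
  exact absurd (hRF.entry_le hlam (by omega) h) (by omega)

theorem entry_row_start (hlam : IsPartitionOf m lam) (hT : IsSYT lam m T)
    (hRF : RowsFilled lam T k) (hk : k < lam.length) : T k 0 = partialSum lam k + 1 := by
  have hk0 : InShape lam k 0 := ⟨hk, hlam.getD_pos hk⟩
  obtain ⟨i, j, h, hval⟩ := hT.exists_cell (v := partialSum lam k + 1) (by omega)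
    (by have := hlam.partialSum_lt hk; omega)
  have hki : k ≤ i := hRF.le_row_of_entry_gt hlam h (by omega)
  by_cases hne : (k, 0) = (i, j)
  · obtain ⟨rfl, rfl⟩ := Prod.ext_iff.1 hne
    exact hval
  · have hlt := hT.entry_lt_entry hlam h hki (Nat.zero_le j) hne
    exact absurd (hRF.row_lt_of_entry_le hT hk.le hk0 (by omega)) (lt_irrefl k)

theorem entry_succ_of_not_isDescent (hlam : IsPartitionOf m lam) (hT : IsSYT lam m T)
    (hRF : RowsFilled lam T k) (hk : k < lam.length) {t : ℕ} (ht : t + 1 < lam.getD k 0)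
    (hprev : T k t = partialSum lam k + t + 1)
    (hnd : ¬ IsDescent lam T (partialSum lam k + t + 1)) :
    T k (t + 1) = partialSum lam k + t + 2 := by
  have hkt : InShape lam k (t + 1) := ⟨hk, ht⟩
  have hsucc := partialSum_succ hk
  obtain ⟨i, j, h, hval⟩ := hT.exists_cell (v := partialSum lam k + t + 2) (by omega)
    (by have := hlam.partialSum_le (k + 1); omega)
  have hi : i = k := le_antisymm
    (not_lt.1 fun hki => hnd ⟨k, t, i, j, hkt.mono hlam le_rfl (by omega), h, hprev, hval, hki⟩)
    (hRF.le_row_of_entry_gt hlam h (by omega))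
  subst hi
  have htj : t < j := by
    by_contra! hjt
    have := hT.1.2.2.1 i j t hjt (hkt.mono hlam le_rfl (by omega))
    omega
  rcases (Nat.succ_le_of_lt htj).eq_or_lt with rfl | hj
  · exact hval
  · have h₁ : T i t < T i (t + 1) := hT.entry_lt_entry hlam hkt le_rfl (by omega) (by simp)
    have h₂ : T i (t + 1) < T i j := hT.entry_lt_entry hlam h le_rfl hj.le (by simp; omega)
    omega

theorem succ (hlam : IsPartitionOf m lam) (hT : IsSYT lam m T) (hRF : RowsFilled lam T k)
    (hk : k < lam.length)
    (hnd : ∀ u, partialSum lam k < u → u < partialSum lam (k + 1) → ¬ IsDescent lam T u) :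
    RowsFilled lam T (k + 1) := by
  intro i hi j hj
  rcases (Nat.lt_succ_iff.1 hi).lt_or_eq with hi | rfl
  · exact hRF i hi j hj
  induction j with
  | zero => exact hRF.entry_row_start hlam hT hk
  | succ j ih =>
    have hsucc := partialSum_succ hk
    exact hRF.entry_succ_of_not_isDescent hlam hT hk hj (ih (by omega))
      (hnd _ (by omega) (by omega))

end RowsFilled

theorem rowsFilled_of_forall_not_isDescent {m : ℕ} {lam : List ℕ} {T : Filling}
    (hlam : IsPartitionOf m lam) (hT : IsSYT lam m T) {k : ℕ} (hk : k ≤ lam.length)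
    (hnd : ∀ a < k, ∀ u, partialSum lam a < u → u < partialSum lam (a + 1) →
      ¬ IsDescent lam T u) :
    RowsFilled lam T k := by
  induction k with
  | zero => intro i hi; omega
  | succ k ih =>
    exact (ih (by omega) fun a ha => hnd a (by omega)).succ hlam hT (by omega) (hnd k (by omega))

namespace RowsFilled

variable {m : ℕ} {lam : List ℕ} {T : Filling} {k : ℕ}

theorem isDescent_partialSum (hlam : IsPartitionOf m lam) (hT : IsSYT lam m T)
    (hRF : RowsFilled lam T k) (hk : k ≤ lam.length) {a : ℕ} (ha : 1 ≤ a) (hak : a ≤ k)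
    (ham : partialSum lam a < m) : IsDescent lam T (partialSum lam a) := by
  obtain ⟨r, rfl⟩ : ∃ r, a = r + 1 := ⟨a - 1, by omega⟩
  have hr : r < lam.length := by omega
  have hsucc := partialSum_succ hr
  have hpos := hlam.getD_pos hr
  obtain ⟨i, j, h, hval⟩ := hT.exists_cell (v := partialSum lam (r + 1) + 1) (by omega) ham
  refine ⟨r, lam.getD r 0 - 1, i, j, ⟨hr, by omega⟩, h, ?_, hval, ?_⟩
  · rw [hRF r (by omega) _ (by omega)]
    omega
  · exact (hRF.mono hak).le_row_of_entry_gt hlam h (by omega)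

theorem exists_eq_partialSum_of_isDescent (hT : IsSYT lam m T) (hRF : RowsFilled lam T k)
    (hk : k ≤ lam.length) {u : ℕ} (hd : IsDescent lam T u) (hu : u ≤ partialSum lam k) :
    ∃ a, 1 ≤ a ∧ a ≤ k ∧ u = partialSum lam a := by
  obtain ⟨i₁, j₁, i₂, j₂, h₁, h₂, hval₁, hval₂, hlt⟩ := hd
  have hu1 : 1 ≤ u := hval₁ ▸ hT.1.2.1 _ _ h₁
  obtain ⟨a, ha, hau, hua⟩ := exists_partialSum_lt_le hu1 hu
  have hsucc := partialSum_succ (show a < lam.length by omega)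
  have hcell : InShape lam a (u - partialSum lam a - 1) := ⟨by omega, by omega⟩
  have he₁ := hT.eq_of_entry_eq h₁ hcell (by rw [hval₁, hRF a ha _ hcell.2]; omega)
  refine ⟨a + 1, by omega, by omega, hua.eq_or_lt.resolve_right fun hua' => ?_⟩
  have hnext : InShape lam a (u - partialSum lam a) := ⟨by omega, by omega⟩
  have he₂ := hT.eq_of_entry_eq h₂ hnext (by rw [hval₂, hRF a ha _ hnext.2]; omega)
  omega

theorem isDescent_iff (hlam : IsPartitionOf m lam) (hT : IsSYT lam m T)
    (hRF : RowsFilled lam T k) (hk : k ≤ lam.length) {u : ℕ} (hu : u ≤ partialSum lam k)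
    (hum : u < m) : IsDescent lam T u ↔ u ∈ partialSums lam k := by
  rw [mem_partialSums]
  constructor
  · intro hd
    obtain ⟨a, ha, hak, rfl⟩ := hRF.exists_eq_partialSum_of_isDescent hT hk hd hu
    exact ⟨a - 1, by omega, by rw [Nat.sub_add_cancel ha]⟩
  · rintro ⟨t, ht, rfl⟩
    exact hRF.isDescent_partialSum hlam hT hk (by omega) ht hum

end RowsFilled

section DescentComposition

variable {m : ℕ} {lam : List ℕ} {T : Filling}

theorem mem_descentSet {x : ℕ} :
    x ∈ (Finset.Ico 1 m).filter (fun k => IsDescent lam T k) ↔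
      (1 ≤ x ∧ x < m) ∧ IsDescent lam T x := by
  rw [Finset.mem_filter, Finset.mem_Ico]

theorem desComp_eq_self_of_rowsFilled (hlam : IsPartitionOf m lam) (hT : IsSYT lam m T)
    (hm : 1 ≤ m) (hRF : RowsFilled lam T lam.length) : desComp lam m T = lam := by
  obtain ⟨r, hr⟩ : ∃ r, lam.length = r + 1 := ⟨lam.length - 1, by have := hlam.length_pos hm; omega⟩
  have hsucc := partialSum_succ (show r < lam.length by omega)
  have hlen := hlam.partialSum_length
  rw [hr] at hlen hRF
  have hmem : ∀ x, x ∈ partialSums lam r ↔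
      x ∈ (Finset.Ico 1 m).filter (fun k => IsDescent lam T k) ∧ x ≤ m := by
    intro x
    rw [mem_descentSet]
    constructor
    · intro hx
      obtain ⟨t, ht, rfl⟩ := mem_partialSums.1 hx
      have := hlam.partialSum_lt (show t + 1 < lam.length by omega)
      refine ⟨⟨⟨hlam.one_le_partialSum (by omega) (by omega), this⟩, ?_⟩, by omega⟩
      exact (hRF.isDescent_iff hlam hT (by omega) (by omega) this).2
        (by rw [partialSums_succ]; exact List.mem_append_left _ hx)
    · rintro ⟨⟨⟨-, hxm⟩, hd⟩, -⟩
      rw [hRF.isDescent_iff hlam hT (by omega) (by omega) hxm, partialSums_succ] at hd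
      rcases List.mem_append.1 hd with hx | hx
      · exact hx
      · simp only [List.mem_singleton] at hx
        omega
  obtain ⟨B, hB, hBm⟩ := Finset.exists_sort_eq_append _ (hlam.partialSums_pairwise (by omega)) hmem
  have hB_nil : B = [] := List.eq_nil_iff_forall_not_mem.2 fun x hx => by
    have hxS : x ∈ (Finset.Ico 1 m).filter (fun k => IsDescent lam T k) := by
      rw [← Finset.mem_sort (· ≤ ·), hB]
      exact List.mem_append_right _ hx
    have := hBm x hx
    rw [mem_descentSet] at hxS
    omega
  rw [desComp_eq_gapsFrom lam T (by omega), descentList, hB, hB_nil,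
    gapsFrom_partialSums_append m (by omega), gapsFrom]
  conv_rhs => rw [← List.take_length (l := lam), hr, take_succ_eq_append_getD (by omega)]
  congr 2
  omega

/-- The first descent strictly inside the block of row `a` cuts the `a`-th part short. -/
theorem desComp_lt_of_isDescent (hlam : IsPartitionOf m lam) (hT : IsSYT lam m T) (hm : 1 ≤ m)
    {a q : ℕ} (ha : a < lam.length) (hRF : RowsFilled lam T a) (hq : partialSum lam a < q)
    (hq' : q < partialSum lam (a + 1)) (hd : IsDescent lam T q)
    (hmin : ∀ u, partialSum lam a < u → u < q → ¬ IsDescent lam T u) :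
    desComp lam m T < lam := by
  have hsucc := partialSum_succ ha
  have hqm : q < m := hq'.trans_le (hlam.partialSum_le _)
  have hsorted : (partialSums lam a ++ [q]).Pairwise (· < ·) := by
    refine List.pairwise_append.2 ⟨hlam.partialSums_pairwise ha.le, by simp, ?_⟩
    rintro x hx y hy
    obtain ⟨t, ht, rfl⟩ := mem_partialSums.1 hx
    rw [List.mem_singleton.1 hy]
    exact (hlam.partialSum_mono (show t + 1 ≤ a by omega)).trans_lt hq
  have hmem : ∀ x, x ∈ partialSums lam a ++ [q] ↔
      x ∈ (Finset.Ico 1 m).filter (fun k => IsDescent lam T k) ∧ x ≤ q := by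
    intro x
    rw [mem_descentSet, List.mem_append, List.mem_singleton]
    constructor
    · rintro (hx | rfl)
      · obtain ⟨t, ht, rfl⟩ := mem_partialSums.1 hx
        have hle := hlam.partialSum_mono (show t + 1 ≤ a by omega)
        refine ⟨⟨⟨hlam.one_le_partialSum (by omega) (by omega), by omega⟩, ?_⟩, by omega⟩
        exact (hRF.isDescent_iff hlam hT ha.le hle (by omega)).2 hx
      · exact ⟨⟨⟨by omega, hqm⟩, hd⟩, le_rfl⟩
    · rintro ⟨⟨⟨-, hxm⟩, hxd⟩, hxq⟩
      rcases le_or_gt x (partialSum lam a) with hx | hx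
      · exact Or.inl ((hRF.isDescent_iff hlam hT ha.le hx hxm).1 hxd)
      · exact Or.inr (hxq.eq_or_lt.resolve_right fun hxq' => hmin x hx hxq' hxd)
  obtain ⟨B, hB, -⟩ := Finset.exists_sort_eq_append _ hsorted hmem
  have hlam_eq : lam = lam.take a ++ lam.getD a 0 :: lam.drop (a + 1) := by
    rw [List.getD_eq_getElem lam 0 ha, ← List.drop_eq_getElem_cons ha, List.take_append_drop]
  rw [desComp_eq_gapsFrom lam T (by omega), descentList, hB, List.append_assoc,
    List.singleton_append, gapsFrom_partialSums_append m ha.le, gapsFrom]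
  conv_rhs => rw [hlam_eq]
  exact List.Lex.append_left _ (List.Lex.rel (by omega)) _

theorem desComp_lt_or_rowsFilled (hlam : IsPartitionOf m lam) (hT : IsSYT lam m T)
    (hm : 1 ≤ m) : desComp lam m T < lam ∨ RowsFilled lam T lam.length := by
  by_cases hbad : ∃ a, a < lam.length ∧ ∃ u, partialSum lam a < u ∧
      u < partialSum lam (a + 1) ∧ IsDescent lam T u
  · left
    obtain ⟨ha, hu⟩ := Nat.find_spec hbad
    obtain ⟨hq, hq', hd⟩ := Nat.find_spec hu
    refine desComp_lt_of_isDescent hlam hT hm ha ?_ hq hq' hd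
      fun u h₁ h₂ hdu => Nat.find_min hu h₂ ⟨h₁, h₂.trans hq', hdu⟩
    exact rowsFilled_of_forall_not_isDescent hlam hT ha.le
      fun a' ha' u h₁ h₂ hdu => Nat.find_min hbad ha' ⟨by omega, u, h₁, h₂, hdu⟩
  · push Not at hbad
    exact Or.inr (rowsFilled_of_forall_not_isDescent hlam hT le_rfl
      fun a ha u h₁ h₂ => hbad a ha u h₁ h₂)

theorem desComp_le (hlam : IsPartitionOf m lam) (hT : IsSYT lam m T) (hm : 1 ≤ m) :
    desComp lam m T ≤ lam :=
  (desComp_lt_or_rowsFilled hlam hT hm).elim le_of_lt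
    fun hRF => (desComp_eq_self_of_rowsFilled hlam hT hm hRF).le

end DescentComposition

section Superstandard

variable {m : ℕ} {lam : List ℕ}

noncomputable def superstandard (lam : List ℕ) : Filling := fun i j =>
  if InShape lam i j then partialSum lam i + j + 1 else 0

theorem superstandard_of_inShape {i j : ℕ} (h : InShape lam i j) :
    superstandard lam i j = partialSum lam i + j + 1 :=
  if_pos h

theorem rowsFilled_superstandard (lam : List ℕ) :
    RowsFilled lam (superstandard lam) lam.length :=
  fun _ hi _ hj => superstandard_of_inShape ⟨hi, hj⟩

theorem IsPartitionOf.eq_of_partialSum_add_eq (hlam : IsPartitionOf m lam) {i j i' j' : ℕ}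
    (h : InShape lam i j) (h' : InShape lam i' j')
    (he : partialSum lam i + j = partialSum lam i' + j') : i = i' ∧ j = j' := by
  have key : ∀ {i j i'}, InShape lam i j → i < i' → partialSum lam i + j < partialSum lam i' := by
    intro i j i' h hi
    have := hlam.partialSum_mono (show i + 1 ≤ i' by omega)
    have := partialSum_succ h.1
    have := h.2
    omega
  rcases lt_trichotomy i i' with hi | rfl | hi
  · have := key h hi
    omega
  · exact ⟨rfl, by omega⟩
  · have := key h' hi
    omega

theorem superstandard_isSYT (hlam : IsPartitionOf m lam) : IsSYT lam m (superstandard lam) := by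
  have hle : ∀ i j, InShape lam i j → partialSum lam i + j + 1 ≤ m := fun i j h => by
    have := hlam.partialSum_le (i + 1)
    have := partialSum_succ h.1
    have := h.2
    omega
  refine ⟨⟨fun i j h => if_neg h, fun i j h => by rw [superstandard_of_inShape h]; omega,
    fun i j₁ j₂ hj h => ?_, fun i₁ i₂ j hi h => ?_⟩, fun i j => ?_, fun v hv hvm => ?_⟩
  · rw [superstandard_of_inShape h, superstandard_of_inShape (h.mono hlam le_rfl hj)]
    omega
  · rw [superstandard_of_inShape h, superstandard_of_inShape (h.mono hlam hi.le le_rfl)]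
    have := hlam.partialSum_lt_partialSum hi h.1.le
    omega
  · by_cases h : InShape lam i j
    · exact superstandard_of_inShape h ▸ hle i j h
    · rw [superstandard, if_neg h]
      omega
  · obtain ⟨a, -, j, h, hval⟩ := (rowsFilled_superstandard lam).exists_cell le_rfl hv
      (hlam.partialSum_length ▸ hvm)
    refine ⟨(a, j), ⟨h, hval⟩, fun ⟨i', j'⟩ ⟨h', hval'⟩ => ?_⟩
    rw [superstandard_of_inShape h] at hval
    rw [superstandard_of_inShape h'] at hval'
    obtain ⟨rfl, rfl⟩ := hlam.eq_of_partialSum_add_eq h' h (by omega)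
    rfl

theorem RowsFilled.eq_superstandard {T : Filling} (hT : IsSYT lam m T)
    (hRF : RowsFilled lam T lam.length) : T = superstandard lam := by
  funext i j
  by_cases h : InShape lam i j
  · rw [hRF i h.1 j h.2, superstandard_of_inShape h]
  · rw [hT.1.1 i j h, superstandard, if_neg h]

theorem eq_superstandard_of_desComp_eq {T : Filling} (hlam : IsPartitionOf m lam)
    (hT : IsSYT lam m T) (hm : 1 ≤ m) (h : desComp lam m T = lam) : T = superstandard lam :=
  (desComp_lt_or_rowsFilled hlam hT hm).elim (fun hlt => absurd (h ▸ hlt) (lt_irrefl _))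
    fun hRF => hRF.eq_superstandard hT

theorem card_desComp_eq_self (hlam : IsPartitionOf m lam) (hm : 1 ≤ m) :
    Nat.card {T : Filling // IsSYT lam m T ∧ desComp lam m T = lam} = 1 := by
  have hsuper := superstandard_isSYT hlam
  refine Nat.card_eq_one_iff_exists.2 ⟨⟨superstandard lam, hsuper, ?_⟩, fun T => ?_⟩
  · exact desComp_eq_self_of_rowsFilled hlam hsuper hm (rowsFilled_superstandard lam)
  · exact Subtype.ext (eq_superstandard_of_desComp_eq hlam T.2.1 hm T.2.2)

end Superstandard

theorem lex_leading_term_is_partition_general (m : ℕ) (hm : 1 ≤ m) (c : List ℕ → ℕ)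
    (d : List ℕ → ℕ)
    (hd : ∀ a, d a = ∑ᶠ lam : {l : List ℕ // IsPartitionOf m l},
        c lam.val * Nat.card {T : Filling // IsSYT lam.val m T ∧ desComp lam.val m T = a})
    (astar : List ℕ) (ha2 : d astar ≠ 0)
    (ha3 : ∀ b, IsCompositionOf m b → d b ≠ 0 → lexLe b astar) :
    IsPartitionOf m astar ∧ d astar = c astar ∧
      ∀ b, IsCompositionOf m b →
        c astar * Nat.card {T : Filling // IsSYT astar m T ∧ desComp astar m T = b} ≤
          d b := by
  have := finite_isPartitionOf m
  let N (lam : {l : List ℕ // IsPartitionOf m l}) (a : List ℕ) : ℕ :=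
    Nat.card {T : Filling // IsSYT lam.val m T ∧ desComp lam.val m T = a}
  have hdiag (lam) : N lam lam.val = 1 := card_desComp_eq_self lam.2 hm
  have hsupp (lam) (a) (ha : N lam a ≠ 0) : a ≤ lam.val := by
    obtain ⟨T, hT, rfl⟩ := (Nat.card_ne_zero.1 ha).1.some
    exact desComp_le lam.2 hT hm
  obtain ⟨lam, rfl, hlead⟩ := exists_eq_and_finsum_eq_of_unitriangular Subtype.val_injective
    hdiag hsupp (fun lam => c lam.val) (hd astar ▸ ha2)
    fun lam h => lexLe_iff_le.1 (ha3 _ ⟨lam.2.2.1, lam.2.2.2⟩ (hd _ ▸ h))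
  refine ⟨lam.2, (hd _).trans hlead, fun b _ => ?_⟩
  rw [hd b]
  exact mul_le_finsum_mul (fun l => c l.val) N lam b

/-- Let `c` assign a natural number to each partition of `m ≥ 1`, not identically zero, and
for each composition `a` of `m` let `d a = ∑_{lam ⊢ m} c(lam) · #{T ∈ SYT(lam) :
DesComp(T) = a}`. If `astar` is the lexicographically largest composition of `m` with
`d astar ≠ 0`, then `astar` is a partition, `d astar = c astar`, and
`d b ≥ c(astar) · #{T ∈ SYT(astar) : DesComp(T) = b}` for every composition `b` of `m`. -/
theorem lex_leading_term_is_partition (m : ℕ) (hm : 1 ≤ m) (c : List ℕ → ℕ)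
    (hc : ∃ lam, IsPartitionOf m lam ∧ c lam ≠ 0)
    (d : List ℕ → ℕ)
    (hd : ∀ a, d a = ∑ᶠ lam : {l : List ℕ // IsPartitionOf m l},
        c lam.val * Nat.card {T : Filling // IsSYT lam.val m T ∧ desComp lam.val m T = a})
    (astar : List ℕ) (ha1 : IsCompositionOf m astar) (ha2 : d astar ≠ 0)
    (ha3 : ∀ b, IsCompositionOf m b → d b ≠ 0 → lexLe b astar) :
    IsPartitionOf m astar ∧ d astar = c astar ∧
      ∀ b, IsCompositionOf m b →
        c astar * Nat.card {T : Filling // IsSYT astar m T ∧ desComp astar m T = b} ≤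
          d b :=
  lex_leading_term_is_partition_general m hm c d hd astar ha2 ha3

end QC
end

section
/- Let λ be a partition of m and n ≥ 1. A standard Young tableau T₀ of shape λ is the standardization of some semistandard Young tableau of shape λ with all entries at most n if and only if the descent composition DesComp(T₀) has at most n parts. -/
open scoped Classical

namespace QC

/-!
Write `N(k)` for the number of descents of `T₀` below `k`. If `T` standardizes to `T₀`, the
entry of `T` at the cell of `k + 1` is at least the entry at the cell of `k`, and strictly
larger when `k` is a descent, since then `k + 1` sits in a lower row. Hence the cell of `k`
carries an entry `> N(k)`, so `n > N(m)`, and `N(m) + 1` is the number of parts of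
`DesComp(T₀)`. Conversely, the filling `c ↦ N(T₀ c) + 1` is semistandard with entries at most
`N(m) + 1` and standardizes to `T₀`: between two values of `T₀` with no descent in between,
the cells move weakly up and strictly right, so ties are broken by column exactly as in `T₀`.
-/

section Shape

variable {lam : List ℕ}

lemma mem_cells {c : ℕ × ℕ} : c ∈ cells lam ↔ InShape lam c.1 c.2 := by
  obtain ⟨i, j⟩ := c
  simp only [cells, Finset.mem_biUnion, Finset.mem_range, Finset.mem_product,
    Finset.mem_singleton, InShape]
  constructor
  · rintro ⟨i', hi', rfl, hj⟩
    exact ⟨hi', hj⟩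
  · rintro ⟨hi, hj⟩
    exact ⟨i, hi, rfl, hj⟩

lemma InShape.of_row_le (hs : lam.Pairwise (· ≥ ·)) {i1 i2 j : ℕ} (h : InShape lam i2 j)
    (hle : i1 ≤ i2) : InShape lam i1 j := by
  obtain ⟨h1, h2⟩ := h
  have hi1 : i1 < lam.length := lt_of_le_of_lt hle h1
  refine ⟨hi1, lt_of_lt_of_le h2 ?_⟩
  rcases hle.eq_or_lt with rfl | hlt
  · exact le_rfl
  · rw [List.getD_eq_getElem lam 0 h1, List.getD_eq_getElem lam 0 hi1]
    exact List.pairwise_iff_getElem.mp hs i1 i2 hi1 h1 hlt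

end Shape

namespace IsSSYT

variable {lam : List ℕ} {T : Filling} {i1 j1 i2 j2 : ℕ}

lemma mono (hs : lam.Pairwise (· ≥ ·)) (hT : IsSSYT lam T) (hi : i1 ≤ i2) (hj : j1 ≤ j2)
    (h : InShape lam i2 j2) : T i1 j1 ≤ T i2 j2 := by
  rcases hi.eq_or_lt with rfl | hi
  · exact hT.2.2.1 _ _ _ hj h
  · calc T i1 j1 ≤ T i1 j2 := hT.2.2.1 _ _ _ hj (h.of_row_le hs hi.le)
      _ ≤ T i2 j2 := (hT.2.2.2 _ _ _ hi h).le

lemma lt_of_row_lt (hs : lam.Pairwise (· ≥ ·)) (hT : IsSSYT lam T) (hi : i1 < i2)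
    (hj : j1 ≤ j2) (h : InShape lam i2 j2) : T i1 j1 < T i2 j2 :=
  calc T i1 j1 ≤ T i1 j2 := hT.2.2.1 _ _ _ hj (h.of_row_le hs hi.le)
    _ < T i2 j2 := hT.2.2.2 _ _ _ hi h

lemma col_lt_of_lt_of_row_le (hs : lam.Pairwise (· ≥ ·)) (hT : IsSSYT lam T)
    (hlt : T i1 j1 < T i2 j2) (hi : i2 ≤ i1) (h : InShape lam i1 j1) : j1 < j2 := by
  by_contra hj
  exact (hT.mono hs hi (not_lt.mp hj) h).not_gt hlt

end IsSSYT

section Standardization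

variable {lam : List ℕ} {T : Filling} {i1 j1 i2 j2 : ℕ}

lemma stdize_le_stdize (hc1 : InShape lam i1 j1) (hc2 : InShape lam i2 j2)
    (h : T i1 j1 < T i2 j2 ∨ (T i1 j1 = T i2 j2 ∧ j1 ≤ j2)) :
    stdize lam T i1 j1 ≤ stdize lam T i2 j2 := by
  rw [stdize, stdize, if_pos hc1, if_pos hc2]
  refine Finset.card_le_card fun c hc => ?_
  simp only [Finset.mem_filter] at hc ⊢
  exact ⟨hc.1, by omega⟩

lemma le_of_stdize_lt (hc1 : InShape lam i1 j1) (hc2 : InShape lam i2 j2)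
    (h : stdize lam T i1 j1 < stdize lam T i2 j2) : T i1 j1 ≤ T i2 j2 := by
  by_contra hlt
  exact (stdize_le_stdize hc2 hc1 (.inl (not_le.mp hlt))).not_gt h

lemma IsSSYT.lt_of_stdize_lt_of_row_lt (hs : lam.Pairwise (· ≥ ·)) (hT : IsSSYT lam T)
    (hc1 : InShape lam i1 j1) (hc2 : InShape lam i2 j2)
    (h : stdize lam T i1 j1 < stdize lam T i2 j2) (hi : i1 < i2) : T i1 j1 < T i2 j2 := by
  by_cases hj : j1 ≤ j2
  · exact hT.lt_of_row_lt hs hi hj hc2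
  · by_contra hge
    exact (stdize_le_stdize hc2 hc1 (by omega)).not_gt h

end Standardization

section NumDescents

variable {lam : List ℕ} {T : Filling}

lemma numDescents_mono {a b : ℕ} (h : a ≤ b) : numDescents lam a T ≤ numDescents lam b T :=
  Finset.card_le_card (Finset.filter_subset_filter _ (Finset.Ico_subset_Ico_right h))

lemma numDescents_lt_numDescents {a b d : ℕ} (hd1 : 1 ≤ d) (had : a ≤ d) (hdb : d < b)
    (hd : IsDescent lam T d) : numDescents lam a T < numDescents lam b T := by
  refine Finset.card_lt_card ((Finset.ssubset_iff_of_subset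
    (Finset.filter_subset_filter _ (Finset.Ico_subset_Ico_right (by omega)))).2 ⟨d, ?_, ?_⟩)
  · simp only [Finset.mem_filter, Finset.mem_Ico]
    exact ⟨⟨hd1, hdb⟩, hd⟩
  · simp only [Finset.mem_filter, Finset.mem_Ico]
    omega

lemma numDescents_succ {k : ℕ} (hk : 1 ≤ k) :
    numDescents lam (k + 1) T = numDescents lam k T + if IsDescent lam T k then 1 else 0 := by
  rw [numDescents, numDescents, Nat.Ico_succ_right_eq_insert_Ico hk, Finset.filter_insert]
  split_ifs
  · exact Finset.card_insert_of_notMem (by simp)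
  · rfl

lemma length_desComp {m : ℕ} (hm : m ≠ 0) :
    (desComp lam m T).length = numDescents lam m T + 1 := by
  simp [desComp, hm, descentList, numDescents]

end NumDescents

namespace IsSYT

variable {lam : List ℕ} {m : ℕ} {T₀ : Filling} {i1 j1 i2 j2 : ℕ}

lemma one_le (hT₀ : IsSYT lam m T₀) {i j : ℕ} (h : InShape lam i j) : 1 ≤ T₀ i j :=
  hT₀.1.2.1 i j h

lemma le (hT₀ : IsSYT lam m T₀) {i j : ℕ} : T₀ i j ≤ m :=
  hT₀.2.1 i j

lemma exists_cell_s16 (hT₀ : IsSYT lam m T₀) {k : ℕ} (h1 : 1 ≤ k) (hk : k ≤ m) :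
    ∃ i j, InShape lam i j ∧ T₀ i j = k := by
  obtain ⟨⟨i, j⟩, hc, -⟩ := hT₀.2.2 k h1 hk
  exact ⟨i, j, hc⟩

lemma cell_unique (hT₀ : IsSYT lam m T₀) (hc1 : InShape lam i1 j1) (hc2 : InShape lam i2 j2)
    (h : T₀ i1 j1 = T₀ i2 j2) : i1 = i2 ∧ j1 = j2 := by
  obtain ⟨_, -, hu⟩ := hT₀.2.2 (T₀ i1 j1) (hT₀.one_le hc1) hT₀.le
  exact Prod.ext_iff.mp ((hu (i1, j1) ⟨hc1, rfl⟩).trans (hu (i2, j2) ⟨hc2, h.symm⟩).symm)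

lemma row_lt_of_isDescent (hT₀ : IsSYT lam m T₀) {k : ℕ} (hd : IsDescent lam T₀ k)
    (hc1 : InShape lam i1 j1) (hc2 : InShape lam i2 j2) (hv1 : T₀ i1 j1 = k)
    (hv2 : T₀ i2 j2 = k + 1) : i1 < i2 := by
  obtain ⟨a1, b1, a2, b2, ha, hb, hva, hvb, hab⟩ := hd
  obtain ⟨rfl, -⟩ := hT₀.cell_unique hc1 ha (hv1.trans hva.symm)
  obtain ⟨rfl, -⟩ := hT₀.cell_unique hc2 hb (hv2.trans hvb.symm)
  exact hab

lemma card_filter_le (hT₀ : IsSYT lam m T₀) {k : ℕ} (hk : k ≤ m) :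
    ((cells lam).filter fun c => T₀ c.1 c.2 ≤ k).card = k := by
  refine (Finset.card_bij (fun c _ => T₀ c.1 c.2) ?_ ?_ ?_).trans (Nat.card_Icc 1 k)
  · intro c hc
    rw [Finset.mem_filter, mem_cells] at hc
    exact Finset.mem_Icc.mpr ⟨hT₀.one_le hc.1, hc.2⟩
  · intro c hc c' hc' hv
    rw [Finset.mem_filter, mem_cells] at hc hc'
    exact Prod.ext_iff.mpr (hT₀.cell_unique hc.1 hc'.1 hv)
  · intro v hv
    rw [Finset.mem_Icc] at hv
    obtain ⟨i, j, hc, rfl⟩ := hT₀.exists_cell_s16 hv.1 (hv.2.trans hk)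
    exact ⟨(i, j), Finset.mem_filter.mpr ⟨mem_cells.mpr hc, hv.2⟩, rfl⟩

lemma row_le_col_lt_of_not_isDescent (hs : lam.Pairwise (· ≥ ·)) (hT₀ : IsSYT lam m T₀)
    {k : ℕ} (hnd : ¬ IsDescent lam T₀ k) (hc1 : InShape lam i1 j1) (hc2 : InShape lam i2 j2)
    (hv1 : T₀ i1 j1 = k) (hv2 : T₀ i2 j2 = k + 1) : i2 ≤ i1 ∧ j1 < j2 := by
  have hi : i2 ≤ i1 := by
    by_contra h
    exact hnd ⟨i1, j1, i2, j2, hc1, hc2, hv1, hv2, by omega⟩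
  exact ⟨hi, hT₀.1.col_lt_of_lt_of_row_le hs (by omega) hi hc1⟩

lemma row_le_col_lt_of_no_descent (hs : lam.Pairwise (· ≥ ·)) (hT₀ : IsSYT lam m T₀)
    {a b : ℕ} (hab : a < b) (hnd : ∀ d, a ≤ d → d < b → ¬ IsDescent lam T₀ d)
    (hc1 : InShape lam i1 j1) (hc2 : InShape lam i2 j2)
    (hv1 : T₀ i1 j1 = a) (hv2 : T₀ i2 j2 = b) : i2 ≤ i1 ∧ j1 < j2 := by
  induction b, hab using Nat.le_induction generalizing i2 j2 with
  | base =>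
    exact hT₀.row_le_col_lt_of_not_isDescent hs (hnd a le_rfl (by omega)) hc1 hc2 hv1 hv2
  | succ b hab ih =>
    have hbm : b + 1 ≤ m := hv2 ▸ hT₀.le
    obtain ⟨i, j, hc, hv⟩ := hT₀.exists_cell_s16 (k := b) (by omega) (by omega)
    have h1 := ih (fun d h1 h2 => hnd d h1 (by omega)) hc hv
    have h2 := hT₀.row_le_col_lt_of_not_isDescent hs (hnd b (by omega) (by omega)) hc hc2 hv hv2
    omega

lemma col_lt_of_numDescents_eq (hs : lam.Pairwise (· ≥ ·)) (hT₀ : IsSYT lam m T₀)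
    (hc1 : InShape lam i1 j1) (hc2 : InShape lam i2 j2) (hlt : T₀ i1 j1 < T₀ i2 j2)
    (heq : numDescents lam (T₀ i1 j1) T₀ = numDescents lam (T₀ i2 j2) T₀) : j1 < j2 :=
  (hT₀.row_le_col_lt_of_no_descent hs hlt (fun _ h1 h2 hd =>
    (numDescents_lt_numDescents ((hT₀.one_le hc1).trans h1) h1 h2 hd).ne heq)
    hc1 hc2 rfl rfl).2

end IsSYT

section Forward

variable {lam : List ℕ} {m : ℕ} {T : Filling}

lemma IsSSYT.numDescents_lt_of_stdize (hs : lam.Pairwise (· ≥ ·)) (hT : IsSSYT lam T)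
    (hstd : IsSYT lam m (stdize lam T)) {i j : ℕ} (h : InShape lam i j) :
    numDescents lam (stdize lam T i j) (stdize lam T) < T i j := by
  suffices key : ∀ k, 1 ≤ k → k ≤ m → ∀ i j, InShape lam i j → stdize lam T i j = k →
      numDescents lam k (stdize lam T) < T i j from
    key _ (hstd.one_le h) hstd.le i j h rfl
  intro k hk
  induction k, hk using Nat.le_induction with
  | base =>
    intro _ i j hc _
    simpa [numDescents] using hT.2.1 i j hc
  | succ k hk ih =>
    intro hkm i j hc hv
    obtain ⟨i', j', hc', hv'⟩ := hstd.exists_cell_s16 hk (by omega)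
    have hlt : stdize lam T i' j' < stdize lam T i j := by omega
    have hprev := ih (by omega) i' j' hc' hv'
    rw [numDescents_succ hk]
    split_ifs with hd
    · have := hT.lt_of_stdize_lt_of_row_lt hs hc' hc hlt
        (hstd.row_lt_of_isDescent hd hc' hc hv' hv)
      omega
    · have := le_of_stdize_lt hc' hc hlt
      omega

lemma length_desComp_stdize_le (hs : lam.Pairwise (· ≥ ·)) (hT : IsSSYT lam T) {n : ℕ}
    (hle : EntriesLE n T) (hstd : IsSYT lam m (stdize lam T)) :
    (desComp lam m (stdize lam T)).length ≤ n := by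
  rcases Nat.eq_zero_or_pos m with rfl | hm
  · simp [desComp]
  obtain ⟨i, j, hc, hv⟩ := hstd.exists_cell_s16 hm le_rfl
  have hlt := hT.numDescents_lt_of_stdize hs hstd hc
  rw [hv] at hlt
  rw [length_desComp hm.ne']
  exact Nat.succ_le_of_lt (hlt.trans_le (hle i j))

end Forward

/-- On the shape this is the paper's destandardization `Dmap (desComp lam m T₀) T₀`. -/
noncomputable def descentFilling (lam : List ℕ) (T₀ : Filling) : Filling := fun i j =>
  if InShape lam i j then numDescents lam (T₀ i j) T₀ + 1 else 0

namespace IsSYT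

variable {lam : List ℕ} {m : ℕ} {T₀ : Filling}

lemma isSSYT_descentFilling (hs : lam.Pairwise (· ≥ ·)) (hT₀ : IsSYT lam m T₀) :
    IsSSYT lam (descentFilling lam T₀) := by
  refine ⟨fun i j h => if_neg h, fun i j h => by simp [descentFilling, h], ?_, ?_⟩
  · intro i j1 j2 hj hc2
    have hc1 : InShape lam i j1 := ⟨hc2.1, lt_of_le_of_lt hj hc2.2⟩
    simp only [descentFilling, if_pos hc1, if_pos hc2, add_le_add_iff_right]
    exact numDescents_mono (hT₀.1.2.2.1 i j1 j2 hj hc2)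
  · intro i1 i2 j hi hc2
    have hc1 := hc2.of_row_le hs hi.le
    simp only [descentFilling, if_pos hc1, if_pos hc2, add_lt_add_iff_right]
    have hlt := hT₀.1.2.2.2 i1 i2 j hi hc2
    exact (numDescents_mono hlt.le).lt_of_ne fun heq =>
      (hT₀.col_lt_of_numDescents_eq hs hc1 hc2 hlt heq).false

lemma descentFilling_le (hT₀ : IsSYT lam m T₀) (i j : ℕ) :
    descentFilling lam T₀ i j ≤ (desComp lam m T₀).length := by
  unfold descentFilling
  split_ifs with h
  · have := hT₀.one_le h
    rw [length_desComp (by have := hT₀.le (i := i) (j := j); omega), add_le_add_iff_right]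
    exact numDescents_mono hT₀.le
  · exact Nat.zero_le _

lemma numDescents_lex_le_iff (hs : lam.Pairwise (· ≥ ·)) (hT₀ : IsSYT lam m T₀)
    {i1 j1 i2 j2 : ℕ} (hc1 : InShape lam i1 j1) (hc2 : InShape lam i2 j2) :
    (numDescents lam (T₀ i1 j1) T₀ < numDescents lam (T₀ i2 j2) T₀ ∨
        (numDescents lam (T₀ i1 j1) T₀ = numDescents lam (T₀ i2 j2) T₀ ∧ j1 ≤ j2)) ↔
      T₀ i1 j1 ≤ T₀ i2 j2 := by
  constructor
  · intro h
    by_contra hlt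
    rw [not_le] at hlt
    have hmono := numDescents_mono (lam := lam) (T := T₀) hlt.le
    rcases h with h | ⟨heq, hj⟩
    · omega
    · have := hT₀.col_lt_of_numDescents_eq hs hc2 hc1 hlt heq.symm
      omega
  · intro hle
    rcases hle.eq_or_lt with heq | hlt
    · obtain ⟨rfl, rfl⟩ := hT₀.cell_unique hc1 hc2 heq
      exact .inr ⟨rfl, le_rfl⟩
    · rcases (numDescents_mono (lam := lam) (T := T₀) hlt.le).lt_or_eq with h | h
      · exact .inl h
      · exact .inr ⟨h, (hT₀.col_lt_of_numDescents_eq hs hc1 hc2 hlt h).le⟩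

lemma stdize_descentFilling (hs : lam.Pairwise (· ≥ ·)) (hT₀ : IsSYT lam m T₀) :
    stdize lam (descentFilling lam T₀) = T₀ := by
  funext i j
  by_cases h : InShape lam i j
  · calc stdize lam (descentFilling lam T₀) i j
        = ((cells lam).filter fun c => T₀ c.1 c.2 ≤ T₀ i j).card := by
          rw [stdize, if_pos h]
          congr 1
          refine Finset.filter_congr fun c hc => ?_
          have hc' := mem_cells.mp hc
          simp only [descentFilling, if_pos hc', if_pos h, add_lt_add_iff_right,
            add_left_inj]
          exact hT₀.numDescents_lex_le_iff hs hc' h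
      _ = T₀ i j := hT₀.card_filter_le hT₀.le
  · rw [stdize, if_neg h, hT₀.1.1 i j h]

end IsSYT

theorem exists_ssyt_standardizing_iff_general (m n : ℕ) (lam : List ℕ)
    (hlam : IsPartitionOf m lam) (T₀ : Filling) (hT₀ : IsSYT lam m T₀) :
    (∃ T : Filling, IsSSYT lam T ∧ EntriesLE n T ∧ stdize lam T = T₀) ↔
      (desComp lam m T₀).length ≤ n := by
  constructor
  · rintro ⟨T, hT, hle, rfl⟩
    exact length_desComp_stdize_le hlam.1 hT hle hT₀
  · intro hlen
    exact ⟨descentFilling lam T₀, hT₀.isSSYT_descentFilling hlam.1,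
      fun i j => (hT₀.descentFilling_le i j).trans hlen, hT₀.stdize_descentFilling hlam.1⟩

/-- A standard Young tableau `T₀` of shape `lam ⊢ m` is the standardization of some
semistandard Young tableau of shape `lam` with entries at most `n` iff its descent
composition has at most `n` parts. -/
theorem exists_ssyt_standardizing_iff (m n : ℕ) (hn : 1 ≤ n) (lam : List ℕ)
    (hlam : IsPartitionOf m lam) (T₀ : Filling) (hT₀ : IsSYT lam m T₀) :
    (∃ T : Filling, IsSSYT lam T ∧ EntriesLE n T ∧ stdize lam T = T₀) ↔
      (desComp lam m T₀).length ≤ n :=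
  exists_ssyt_standardizing_iff_general m n lam hlam T₀ hT₀

end QC
end
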